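/- Let X be a normed space and (aᵏ)ₖ₌₀..N ⊂ X. Suppose there exist constants A, B ≥ 0 and a time step τ = T/N such that ‖aᵏ⁺ˡ − aᵏ‖ ≤ ∑_{n=k+1}^{k+l} τ·(bₙ + cₙ) for all 0 ≤ k ≤ N − l, where τ∑ₙ bₙ² ≤ A² and τ∑ₙ cₙ² ≤ B². Then τ ∑_{k=0}^{N−l} ‖aᵏ⁺ˡ − aᵏ‖² ≤ C τ l with C depending only on A, B, T. -/

import Mathlib

open Finset

/-- Counting lemma: summing a nonneg function over sliding windows of length `l`
counts each index at most `l` times. -/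
lemma window_sum_le (N l : ℕ) (hl : 1 ≤ l) (hlN : l ≤ N) (f : ℕ → ℝ)
    (hf : ∀ n, 0 ≤ f n) :
    ∑ k ∈ range (N - l + 1), ∑ n ∈ Icc (k + 1) (k + l), f n
      ≤ l * ∑ n ∈ Icc 1 N, f n := by
  have h1 : ∀ k : ℕ, ∑ n ∈ Icc (k + 1) (k + l), f n = ∑ j ∈ range l, f (k + 1 + j) := by
    intro k
    rw [← Finset.Ico_add_one_right_eq_Icc, Finset.sum_Ico_eq_sum_range]
    have : k + l + 1 - (k + 1) = l := by omega
    rw [this]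
  calc ∑ k ∈ range (N - l + 1), ∑ n ∈ Icc (k + 1) (k + l), f n
      = ∑ k ∈ range (N - l + 1), ∑ j ∈ range l, f (k + 1 + j) := by
        exact Finset.sum_congr rfl fun k _ => h1 k
    _ = ∑ j ∈ range l, ∑ k ∈ range (N - l + 1), f (k + 1 + j) := Finset.sum_comm
    _ ≤ ∑ j ∈ range l, ∑ n ∈ Icc 1 N, f n := by
        refine Finset.sum_le_sum fun j hj => ?_
        have hj' : j < l := Finset.mem_range.mp hj
        have h2 : ∑ k ∈ range (N - l + 1), f (k + 1 + j)
            = ∑ n ∈ Icc (j + 1) (j + 1 + (N - l)), f n := by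
          rw [← Finset.Ico_add_one_right_eq_Icc, Finset.sum_Ico_eq_sum_range]
          have : j + 1 + (N - l) + 1 - (j + 1) = N - l + 1 := by omega
          rw [this]
          exact Finset.sum_congr rfl fun k _ => by rw [show k + 1 + j = j + 1 + k by omega]
        rw [h2]
        refine Finset.sum_le_sum_of_subset_of_nonneg ?_ (fun n _ _ => hf n)
        intro n hn
        simp only [Finset.mem_Icc] at hn ⊢
        omega
    _ = l * ∑ n ∈ Icc 1 N, f n := by
        rw [Finset.sum_const, Finset.card_range, nsmul_eq_mul]

/-- Abstract Nikolskii-type estimate: summed time-lag differences are controlled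
by the lag, with a constant depending only on `A`, `B`, `T`. -/
theorem stmt_8 {X : Type*} [NormedAddCommGroup X] (A B T : ℝ)
    (hA : 0 ≤ A) (hB : 0 ≤ B) (hT : 0 < T) :
    ∃ C > 0, ∀ (N l : ℕ) (τ : ℝ) (a : ℕ → X) (b c : ℕ → ℝ),
      0 < N → τ = T / N → 1 ≤ l → l ≤ N →
      (∀ k, k ≤ N - l →
        ‖a (k + l) - a k‖ ≤ ∑ n ∈ Finset.Icc (k + 1) (k + l), τ * (b n + c n)) →
      τ * ∑ n ∈ Finset.Icc 1 N, (b n)^2 ≤ A^2 →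
      τ * ∑ n ∈ Finset.Icc 1 N, (c n)^2 ≤ B^2 →
      τ * ∑ k ∈ Finset.range (N - l + 1), ‖a (k + l) - a k‖^2 ≤ C * (τ * l) := by
  refine ⟨2 * T * (A ^ 2 + B ^ 2) + 1, by positivity, ?_⟩
  intro N l τ a b c hN hτ hl hlN hab hb hc
  have hNpos : (0 : ℝ) < N := Nat.cast_pos.mpr hN
  have hτpos : 0 < τ := by rw [hτ]; positivity
  have hlpos : (0 : ℝ) < l := by exact_mod_cast hl
  have hτl : τ * l ≤ T := by
    rw [hτ, div_mul_eq_mul_div, div_le_iff₀ hNpos]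
    have : (l : ℝ) ≤ N := Nat.cast_le.mpr hlN
    nlinarith
  -- pointwise bound: ‖a (k+l) - a k‖^2 ≤ l * τ^2 * ∑ (b+c)^2 over window
  have hpt : ∀ k ∈ range (N - l + 1),
      ‖a (k + l) - a k‖ ^ 2 ≤ (l : ℝ) * τ ^ 2 * ∑ n ∈ Icc (k + 1) (k + l), (b n + c n) ^ 2 := by
    intro k hk
    have hk' : k ≤ N - l := by
      have := Finset.mem_range.mp hk; omega
    have h1 := hab k hk'
    have h2 : ‖a (k + l) - a k‖ ^ 2 ≤ (∑ n ∈ Icc (k + 1) (k + l), τ * (b n + c n)) ^ 2 :=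
      pow_le_pow_left₀ (norm_nonneg _) h1 2
    have h3 : (∑ n ∈ Icc (k + 1) (k + l), τ * (b n + c n)) ^ 2
        ≤ (#(Icc (k + 1) (k + l)) : ℝ) * ∑ n ∈ Icc (k + 1) (k + l), (τ * (b n + c n)) ^ 2 :=
      sq_sum_le_card_mul_sum_sq
    have hcard : #(Icc (k + 1) (k + l)) = l := by
      rw [Nat.card_Icc]; omega
    rw [hcard] at h3
    calc ‖a (k + l) - a k‖ ^ 2 ≤ (l : ℝ) * ∑ n ∈ Icc (k + 1) (k + l), (τ * (b n + c n)) ^ 2 :=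
          h2.trans h3
      _ = (l : ℝ) * τ ^ 2 * ∑ n ∈ Icc (k + 1) (k + l), (b n + c n) ^ 2 := by
          simp_rw [mul_pow, ← Finset.mul_sum]; ring
  have hsum : ∑ k ∈ range (N - l + 1), ‖a (k + l) - a k‖ ^ 2
      ≤ (l : ℝ) * τ ^ 2 * ∑ k ∈ range (N - l + 1), ∑ n ∈ Icc (k + 1) (k + l), (b n + c n) ^ 2 := by
    rw [Finset.mul_sum]
    exact Finset.sum_le_sum hpt
  have hwin := window_sum_le N l hl hlN (fun n => (b n + c n) ^ 2) (fun n => sq_nonneg _)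
  have hbc : ∑ n ∈ Icc 1 N, (b n + c n) ^ 2
      ≤ 2 * ∑ n ∈ Icc 1 N, (b n) ^ 2 + 2 * ∑ n ∈ Icc 1 N, (c n) ^ 2 := by
    calc ∑ n ∈ Icc 1 N, (b n + c n) ^ 2
        ≤ ∑ n ∈ Icc 1 N, (2 * (b n) ^ 2 + 2 * (c n) ^ 2) :=
          Finset.sum_le_sum fun n _ => by nlinarith [sq_nonneg (b n - c n)]
      _ = 2 * ∑ n ∈ Icc 1 N, (b n) ^ 2 + 2 * ∑ n ∈ Icc 1 N, (c n) ^ 2 := by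
          rw [Finset.sum_add_distrib, ← Finset.mul_sum, ← Finset.mul_sum]
  -- assemble
  have hS : 0 ≤ ∑ n ∈ Icc 1 N, (b n + c n) ^ 2 :=
    Finset.sum_nonneg fun n _ => sq_nonneg _
  have hτS : τ * ∑ n ∈ Icc 1 N, (b n + c n) ^ 2 ≤ 2 * (A ^ 2 + B ^ 2) := by
    nlinarith [hb, hc]
  have main : τ * ∑ k ∈ range (N - l + 1), ‖a (k + l) - a k‖ ^ 2
      ≤ (τ * l) * (τ * l) * (τ * ∑ n ∈ Icc 1 N, (b n + c n) ^ 2) := by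
    have h4 : ∑ k ∈ range (N - l + 1), ‖a (k + l) - a k‖ ^ 2
        ≤ (l : ℝ) * τ ^ 2 * ((l : ℝ) * ∑ n ∈ Icc 1 N, (b n + c n) ^ 2) :=
      hsum.trans (by
        refine mul_le_mul_of_nonneg_left hwin (by positivity))
    calc τ * ∑ k ∈ range (N - l + 1), ‖a (k + l) - a k‖ ^ 2
        ≤ τ * ((l : ℝ) * τ ^ 2 * ((l : ℝ) * ∑ n ∈ Icc 1 N, (b n + c n) ^ 2)) :=
          mul_le_mul_of_nonneg_left h4 hτpos.le
      _ = (τ * l) * (τ * l) * (τ * ∑ n ∈ Icc 1 N, (b n + c n) ^ 2) := by ring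
  have hτlpos : 0 < τ * l := by positivity
  have hτSnn : 0 ≤ τ * ∑ n ∈ Icc 1 N, (b n + c n) ^ 2 := by positivity
  calc τ * ∑ k ∈ range (N - l + 1), ‖a (k + l) - a k‖ ^ 2
      ≤ (τ * l) * (τ * l) * (τ * ∑ n ∈ Icc 1 N, (b n + c n) ^ 2) := main
    _ ≤ (τ * l) * (T * (2 * (A ^ 2 + B ^ 2))) := by
        have h5 : (τ * l) * (τ * ∑ n ∈ Icc 1 N, (b n + c n) ^ 2)
            ≤ T * (2 * (A ^ 2 + B ^ 2)) :=
          mul_le_mul hτl hτS hτSnn hT.le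
        nlinarith [mul_le_mul_of_nonneg_left h5 hτlpos.le]
    _ ≤ (2 * T * (A ^ 2 + B ^ 2) + 1) * (τ * l) := by nlinarith
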